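/- arXiv:1901.05316 — 5 statements merged into one kernel-verified Lean document; each statement's English description precedes it below -/
import Mathlib

section
/- Let (X, ≤) be a finite partially ordered set. For x ∈ X, let a(x) be the number of elements y ∈ X that are not strictly greater than x. Then for every natural number i with 0 ≤ i ≤ |X|, the number of elements x ∈ X with a(x) ≤ i is at most i. -/
/-! If some element has `a x ≤ i`, take a maximal `m` among all such elements. No element `x`
with `a x ≤ i` lies strictly above `m`, so all of them are counted in `a m ≤ i`. -/

open Finset

theorem Finset.card_le_card_filter_not_lt_of_maximal {X : Type*} [Fintype X] [Preorder X]
    [DecidableRel ((· < ·) : X → X → Prop)] {S : Finset X} {m : X} (hm : Maximal (· ∈ S) m) :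
    #S ≤ #(univ.filter (fun y => ¬ m < y)) :=
  card_le_card fun _ hy => mem_filter.mpr ⟨mem_univ _, hm.not_gt hy⟩

theorem stmt0_general {X : Type*} [Fintype X] [PartialOrder X]
    [DecidableRel ((· < ·) : X → X → Prop)]
    (a : X → ℕ)
    (ha : ∀ x : X, a x = (Finset.univ.filter (fun y => ¬ x < y)).card)
    (i : ℕ) :
    (Finset.univ.filter (fun x => a x ≤ i)).card ≤ i := by
  set S := univ.filter (fun x => a x ≤ i)
  rcases S.eq_empty_or_nonempty with hS | hS
  · simp [hS]
  obtain ⟨m, hm⟩ := S.exists_maximal hS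
  calc #S ≤ #(univ.filter (fun y => ¬ m < y)) := card_le_card_filter_not_lt_of_maximal hm
    _ = a m := (ha m).symm
    _ ≤ i := (mem_filter.mp hm.prop).2

theorem stmt0 {X : Type*} [Fintype X] [PartialOrder X]
    [DecidableRel ((· < ·) : X → X → Prop)]
    (a : X → ℕ)
    (ha : ∀ x : X, a x = (Finset.univ.filter (fun y => ¬ x < y)).card)
    (i : ℕ) (hi : i ≤ Fintype.card X) :
    (Finset.univ.filter (fun x => a x ≤ i)).card ≤ i :=
  stmt0_general a ha i
end

section
/- Let Φ : ℕ → ℝ satisfy Φ(0) = 0 and, for all n ≥ 1, Φ(n) ≤ Φ(n-1) + 1 + (1/n) · Σ_{i=0}^{n-1} Φ(i). Then for all n ≥ 0, Φ(n) ≤ e^{2√n}. -/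
/-!
Strengthen the claim to `Φ n ≤ B n` with `B n = exp (2 √n) - √n - 1` and prove it by
comparison: `B 0 = 0` and `B` satisfies the reverse recurrence inequality. For `n ≥ 3` this
comes from comparing sums with integrals, `∑_{i<n} exp (2 √i) ≤ (√n - 1/2) exp (2 √n) + 1/2`
and `∑_{i<n} √i ≥ (2/3) (n-1)^{3/2}`, together with
`exp (2 √(n-1)) ≤ exp (2 √n) (1 - 1/√n + 1/(2n))`: the exponential terms then cancel
exactly, leaving an algebraic inequality between `√n` and `√(n-1)`. The cases `n = 1, 2` are
numerical.
-/

open Real Finset Set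

noncomputable def recStep (Φ : ℕ → ℝ) (n : ℕ) : ℝ :=
  Φ (n - 1) + 1 + (1 / (n : ℝ)) * ∑ i ∈ range n, Φ i

lemma recStep_mono {Φ Ψ : ℕ → ℝ} {n : ℕ} (hn : 1 ≤ n) (h : ∀ i < n, Φ i ≤ Ψ i) :
    recStep Φ n ≤ recStep Ψ n := by
  unfold recStep
  gcongr with i hi
  · exact h _ (by omega)
  · exact h i (mem_range.mp hi)

lemma le_of_le_recStep {Φ Ψ : ℕ → ℝ} (h0 : Φ 0 ≤ Ψ 0)
    (hΦ : ∀ n, 1 ≤ n → Φ n ≤ recStep Φ n) (hΨ : ∀ n, 1 ≤ n → recStep Ψ n ≤ Ψ n) (n : ℕ) :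
    Φ n ≤ Ψ n := by
  induction n using Nat.strong_induction_on with
  | _ n ih =>
    rcases Nat.eq_zero_or_pos n with rfl | hn
    · exact h0
    · exact (hΦ n hn).trans ((recStep_mono hn ih).trans (hΨ n hn))

section SumIntegral

variable {F f : ℝ → ℝ} {n : ℕ}

lemma integral_eq_sub_of_monotoneOn (hF : ContinuousOn F (Icc 0 n))
    (hF' : ∀ x ∈ Ioo 0 (n : ℝ), HasDerivAt F (f x) x) (hf : MonotoneOn f (Icc 0 n)) :
    ∫ x in (0 : ℝ)..n, f x = F n - F 0 :=
  intervalIntegral.integral_eq_sub_of_hasDerivAt_of_le n.cast_nonneg hF hF'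
    (MonotoneOn.intervalIntegrable (by rwa [Set.uIcc_of_le n.cast_nonneg]))

lemma sum_range_le_sub_of_hasDerivAt (hF : ContinuousOn F (Icc 0 n))
    (hF' : ∀ x ∈ Ioo 0 (n : ℝ), HasDerivAt F (f x) x) (hf : MonotoneOn f (Icc 0 n)) :
    ∑ i ∈ range n, f i ≤ F n - F 0 := by
  have := MonotoneOn.sum_le_integral (x₀ := 0) (a := n) (by simpa using hf)
  simpa [integral_eq_sub_of_monotoneOn hF hF' hf] using this

lemma sub_le_sum_range_of_hasDerivAt (hF : ContinuousOn F (Icc 0 n))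
    (hF' : ∀ x ∈ Ioo 0 (n : ℝ), HasDerivAt F (f x) x) (hf : MonotoneOn f (Icc 0 n)) :
    F n - F 0 ≤ ∑ i ∈ range n, f (i + 1) := by
  have := MonotoneOn.integral_le_sum (x₀ := 0) (a := n) (by simpa using hf)
  simpa [integral_eq_sub_of_monotoneOn hF hF' hf] using this

end SumIntegral

lemma hasDerivAt_sqrt_sub_half_mul_exp {x : ℝ} (hx : 0 < x) :
    HasDerivAt (fun y => (√y - 1 / 2) * exp (2 * √y)) (exp (2 * √x)) x := by
  have hsqrt := hasDerivAt_sqrt hx.ne'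
  refine ((hsqrt.sub_const (1 / 2)).mul ((hsqrt.const_mul 2).exp)).congr_deriv ?_
  field_simp
  ring

lemma hasDerivAt_mul_sqrt {x : ℝ} (hx : 0 < x) :
    HasDerivAt (fun y => 2 / 3 * (y * √y)) (√x) x := by
  refine (((hasDerivAt_id' x).mul (hasDerivAt_sqrt hx.ne')).const_mul (2 / 3)).congr_deriv ?_
  field_simp
  rw [sq_sqrt hx.le]
  ring

lemma sum_range_exp_two_sqrt_le (n : ℕ) :
    ∑ i ∈ range n, exp (2 * √i) ≤ (√n - 1 / 2) * exp (2 * √n) + 1 / 2 := by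
  have := sum_range_le_sub_of_hasDerivAt (F := fun y => (√y - 1 / 2) * exp (2 * √y)) (n := n)
    (by fun_prop) (fun x hx => hasDerivAt_sqrt_sub_half_mul_exp hx.1)
    (fun x _ y _ hxy => by gcongr)
  simpa [sub_add] using this

lemma two_thirds_mul_sqrt_le_sum_range_sqrt (n : ℕ) :
    2 / 3 * (n * √n) ≤ ∑ i ∈ range (n + 1), √i := by
  have := sub_le_sum_range_of_hasDerivAt (F := fun y => 2 / 3 * (y * √y)) (n := n)
    (by fun_prop) (fun x hx => hasDerivAt_mul_sqrt hx.1)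
    (fun x _ y _ hxy => sqrt_le_sqrt hxy)
  simpa [sum_range_succ'] using this

lemma exp_neg_le_one_sub_add_sq_div_two {u : ℝ} (hu : 0 ≤ u) :
    exp (-u) ≤ 1 - u + u ^ 2 / 2 := by
  have h := sum_le_exp_of_nonneg hu 4
  simp only [sum_range_succ, sum_range_zero] at h
  norm_num [Nat.factorial] at h
  rw [exp_neg, inv_le_iff_one_le_mul₀ (exp_pos u)]
  nlinarith [pow_nonneg hu 3, pow_nonneg hu 4, pow_nonneg hu 5]

lemma exp_two_sqrt_sub_one_le {x : ℝ} (hx : 1 ≤ x) :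
    exp (2 * √(x - 1)) ≤ exp (2 * √x) * (1 - 1 / √x + 1 / (2 * x)) := by
  set s := √x
  have hs1 : 1 ≤ s := one_le_sqrt.mpr hx
  have hss : s ^ 2 = x := sq_sqrt (by linarith)
  have hsqrt : √(x - 1) ≤ s - 1 / (2 * s) := by
    have hsub : 0 ≤ s - 1 / (2 * s) := by
      rw [sub_nonneg, div_le_iff₀ (by positivity)]
      nlinarith
    rw [sqrt_le_left hsub, ← hss]
    have : (s - 1 / (2 * s)) ^ 2 = s ^ 2 - 1 + (1 / (2 * s)) ^ 2 := by field_simp; ring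
    nlinarith [sq_nonneg (1 / (2 * s))]
  calc exp (2 * √(x - 1)) ≤ exp (2 * (s - 1 / (2 * s))) := by gcongr
    _ = exp (2 * s + -(1 / s)) := by congr 1; field_simp; ring
    _ = exp (2 * s) * exp (-(1 / s)) := exp_add _ _
    _ ≤ exp (2 * s) * (1 - 1 / s + (1 / s) ^ 2 / 2) := by
        gcongr; exact exp_neg_le_one_sub_add_sq_div_two (by positivity)
    _ = exp (2 * s) * (1 - 1 / s + 1 / (2 * x)) := by rw [← hss]; ring

lemma sq_mul_sub_add_half_le {s t : ℝ} (hs : 0 ≤ s) (ht : 0 ≤ t) (hst : s ^ 2 = t ^ 2 + 1)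
    (ht2 : 2 ≤ t ^ 2) : s ^ 2 * (s - t) + 1 / 2 ≤ 2 / 3 * t ^ 3 := by
  have hts : t ≤ s := by nlinarith
  have h : 2 * t * (s - t) ≤ 1 := by nlinarith
  nlinarith [mul_le_mul_of_nonneg_left h (sq_nonneg s)]

noncomputable def expSqrtMajorant (n : ℕ) : ℝ := exp (2 * √n) - √n - 1

lemma sum_range_expSqrtMajorant (n : ℕ) :
    ∑ i ∈ range n, expSqrtMajorant i =
      ∑ i ∈ range n, exp (2 * √i) - ∑ i ∈ range n, √(i : ℝ) - n := by
  simp [expSqrtMajorant, sum_sub_distrib]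

lemma recStep_expSqrtMajorant_le_of_two_le {m : ℕ} (hm : 2 ≤ m) :
    recStep expSqrtMajorant (m + 1) ≤ expSqrtMajorant (m + 1) := by
  set s := √((m : ℝ) + 1) with hs
  set t := √(m : ℝ)
  have hss : s ^ 2 = m + 1 := sq_sqrt (by positivity)
  have htt : t ^ 2 = m := sq_sqrt (by positivity)
  have hs0 : 0 < s := sqrt_pos.mpr (by positivity)
  have hprev : expSqrtMajorant m ≤ exp (2 * s) * (1 - 1 / s + 1 / (2 * (m + 1))) - t - 1 := by
    have := exp_two_sqrt_sub_one_le (x := (m : ℝ) + 1) (by simp)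
    simp only [add_sub_cancel_right] at this
    simp only [expSqrtMajorant]
    linarith
  have hsum : ∑ i ∈ range (m + 1), expSqrtMajorant i
      ≤ (s - 1 / 2) * exp (2 * s) + 1 / 2 - 2 / 3 * (m * t) - (m + 1) := by
    rw [sum_range_expSqrtMajorant]
    have := sum_range_exp_two_sqrt_le (m + 1)
    have := two_thirds_mul_sqrt_le_sum_range_sqrt m
    push_cast at *
    linarith
  have hkey := sq_mul_sub_add_half_le (s := s) (t := t) (by positivity) (by positivity)
    (by rw [hss, htt]) (by rw [htt]; exact_mod_cast hm)
  calc recStep expSqrtMajorant (m + 1)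
      = expSqrtMajorant m + 1 + 1 / (m + 1) * ∑ i ∈ range (m + 1), expSqrtMajorant i := by
        simp [recStep]
    _ ≤ (exp (2 * s) * (1 - 1 / s + 1 / (2 * (m + 1))) - t - 1) + 1
        + 1 / (m + 1) * ((s - 1 / 2) * exp (2 * s) + 1 / 2 - 2 / 3 * (m * t) - (m + 1)) := by
        gcongr
    _ = exp (2 * s) - s - 1 + (s ^ 2 * (s - t) + 1 / 2 - 2 / 3 * t ^ 3) / s ^ 2 := by
        rw [← hss, ← htt]
        field_simp
        ring
    _ ≤ exp (2 * s) - s - 1 := by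
        have : (s ^ 2 * (s - t) + 1 / 2 - 2 / 3 * t ^ 3) / s ^ 2 ≤ 0 :=
          div_nonpos_of_nonpos_of_nonneg (by linarith) (by positivity)
        linarith
    _ = expSqrtMajorant (m + 1) := by simp [expSqrtMajorant, hs]

lemma recStep_expSqrtMajorant_le {n : ℕ} (hn : 1 ≤ n) :
    recStep expSqrtMajorant n ≤ expSqrtMajorant n := by
  match n, hn with
  | 1, _ =>
    have hB1 : expSqrtMajorant 1 = exp 2 - 2 := by norm_num [expSqrtMajorant]; ring
    have hrec1 : recStep expSqrtMajorant 1 = 1 := by simp [recStep, expSqrtMajorant]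
    linarith [add_one_le_exp 2]
  | 2, _ =>
    have hrec2 : recStep expSqrtMajorant 2 = 3 / 2 * exp 2 - 2 := by
      simp [recStep, expSqrtMajorant, sum_range_succ]; ring
    have hB2 : expSqrtMajorant 2 = exp (2 * √2) - √2 - 1 := by simp [expSqrtMajorant]
    have hsq : √2 ^ 2 = 2 := sq_sqrt (by norm_num)
    have hlow : 7 / 5 ≤ √2 := by nlinarith [sqrt_nonneg 2]
    have hhigh : √2 ≤ 3 / 2 := by nlinarith [sqrt_nonneg 2]
    have hexp : exp 2 * (9 / 5) ≤ exp (2 * √2) :=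
      calc exp 2 * (9 / 5) ≤ exp 2 * exp (4 / 5) := by gcongr; linarith [add_one_le_exp (4 / 5)]
        _ = exp (2 + 4 / 5) := (exp_add _ _).symm
        _ ≤ exp (2 * √2) := by gcongr; linarith
    linarith [add_one_le_exp 2]
  | m + 3, _ => exact recStep_expSqrtMajorant_le_of_two_le (m := m + 2) (by omega)

theorem stmt1 (Φ : ℕ → ℝ) (h0 : Φ 0 = 0)
    (hrec : ∀ n : ℕ, 1 ≤ n →
      Φ n ≤ Φ (n - 1) + 1 + (1 / (n : ℝ)) * ∑ i ∈ Finset.range n, Φ i) :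
    ∀ n : ℕ, Φ n ≤ Real.exp (2 * Real.sqrt n) := by
  intro n
  have h := le_of_le_recStep (by simp [h0, expSqrtMajorant]) hrec
    (fun _ => recStep_expSqrtMajorant_le) n
  have := sqrt_nonneg (n : ℝ)
  rw [expSqrtMajorant] at h
  linarith
end

section
/- If Φ : ℕ → ℝ satisfies Φ(0) = 0 and Φ(n) ≤ Φ(n-1) + 1 + (1/n)·Σ_{i=0}^{n-1} Φ(i) for all n ≥ 1, then Φ is bounded above by a function in 2^{O(√n)}; concretely, Φ(n) ≤ e^{2√n} ≤ 2^{3√n} for all n ≥ 0. -/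
set_option maxHeartbeats 800000

private lemma exp_cubic {x : ℝ} (hx : 0 ≤ x) :
    1 + x + x^2/2 + x^3/6 ≤ Real.exp x := by
  have h := Real.sum_le_exp_of_nonneg hx 4
  simp [Finset.sum_range_succ, Nat.factorial] at h
  linarith

private lemma exp_six {x : ℝ} (hx : 0 ≤ x) :
    1 + x + x^2/2 + x^3/6 + x^4/24 + x^5/120 + x^6/720 ≤ Real.exp x := by
  have h := Real.sum_le_exp_of_nonneg hx 7
  simp [Finset.sum_range_succ, Nat.factorial] at h
  linarith

private lemma mainstep (n : ℕ) (hn : 8 ≤ n) :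
    Real.exp (2*Real.sqrt n) + 1 +
      ((Real.sqrt ((n:ℝ)+1) - 1/2) * Real.exp (2*Real.sqrt ((n:ℝ)+1)) + 1/2) / ((n:ℝ)+1)
      ≤ Real.exp (2*Real.sqrt ((n:ℝ)+1)) := by
  set t := Real.sqrt n with htdef
  set s := Real.sqrt ((n:ℝ)+1) with hsdef
  have ht2 : t^2 = n := Real.sq_sqrt (Nat.cast_nonneg n)
  have hs2 : s^2 = (n:ℝ)+1 := Real.sq_sqrt (by positivity)
  have ht0 : 0 ≤ t := Real.sqrt_nonneg _
  have hs0 : 0 ≤ s := Real.sqrt_nonneg _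
  clear_value t s
  have hn8 : (8:ℝ) ≤ (n:ℝ) := by exact_mod_cast hn
  have ht : 14/5 ≤ t := by nlinarith
  have hs3 : 3 ≤ s := by nlinarith
  have hts : t ≤ s := by nlinarith
  set d := s - t with hddef
  clear_value d
  have hdst : d*(s+t) = 1 := by nlinarith
  have hd0 : 0 < d := by nlinarith
  have hd1 : d ≤ 5/29 := by nlinarith
  have hd : 2*s*d = 1 + d^2 := by nlinarith
  -- the bracket B
  set B := (2*s^2-2*s+1)*(2*d+2*d^2+(4/3)*d^3) + 1 - 2*s with hBdef
  clear_value B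
  have hs_eq : s = (1+d^2)/(2*d) := by
    field_simp
    linarith [hd]
  have hB : 1 ≤ 2*s*B := by
    have hP : 6*d^3*(2*s*B - 1)
        = 4*d^3+4*d^4+20*d^5+2*d^6+14*d^7-2*d^8+4*d^9 := by
      rw [hBdef, hs_eq]
      field_simp
      ring
    have h5 : 4*d^3 ≤ 4*d^3+4*d^4+20*d^5+2*d^6+14*d^7-2*d^8+4*d^9 := by
      nlinarith [hd0.le, hd1, pow_nonneg hd0.le 4, pow_nonneg hd0.le 5,
        pow_nonneg hd0.le 6, pow_nonneg hd0.le 7, pow_nonneg hd0.le 9]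
    nlinarith [hP, h5, pow_pos hd0 3]
  have hBpos : 0 < B := by nlinarith
  -- lower bound on exp(2t)
  have hA : 1 + 2*t + 2*t^2 + (4/3)*t^3 + (2/3)*t^4 + (4/15)*t^5 + (4/45)*t^6
      ≤ Real.exp (2*t) := by
    have h := exp_six (by linarith : (0:ℝ) ≤ 2*t)
    nlinarith [h]
  set p : ℝ := 1 + 2*t + 2*t^2 + (4/3)*t^3 + (2/3)*t^4 + (4/15)*t^5 + (4/45)*t^6 with hpdef
  clear_value p
  have hppos : 0 < p := by rw [hpdef]; positivity
  have hsle : s ≤ t + 5/29 := by linarith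
  have hp : 4*s^3 + 2*s ≤ p := by
    have hcube : s^3 ≤ (t + 5/29)^3 := by
      have := pow_le_pow_left₀ hs0 hsle 3
      simpa using this
    have hu : (0:ℝ) ≤ t - 14/5 := by linarith
    rw [hpdef]
    linarith [hcube, hsle, hu, pow_nonneg hu 2, pow_nonneg hu 3, pow_nonneg hu 4,
      pow_nonneg hu 5, pow_nonneg hu 6]
  -- p * B ≥ 2s²+1
  have hpB : 2*s^2 + 1 ≤ p * B := by
    nlinarith [mul_le_mul_of_nonneg_left hB hppos.le, hp, hs3, hppos]
  -- exp(2s) ≥ exp(2t)*(1+2d+2d²+(4/3)d³)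
  have hcube2 : Real.exp (2*t) * (1 + 2*d + 2*d^2 + (4/3)*d^3) ≤ Real.exp (2*s) := by
    have h1 : 1 + 2*d + 2*d^2 + (4/3)*d^3 ≤ Real.exp (2*d) := by
      have := exp_cubic (by linarith : (0:ℝ) ≤ 2*d)
      nlinarith [this]
    calc Real.exp (2*t) * (1 + 2*d + 2*d^2 + (4/3)*d^3)
        ≤ Real.exp (2*t) * Real.exp (2*d) :=
          mul_le_mul_of_nonneg_left h1 (Real.exp_pos _).le
      _ = Real.exp (2*s) := by rw [← Real.exp_add]; congr 1; rw [hddef]; ring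
  have key : 2*s^2*Real.exp (2*t) + 2*s^2 + 1 ≤ (2*s^2-2*s+1) * Real.exp (2*s) := by
    have h2 : p * B ≤ Real.exp (2*t) * B :=
      mul_le_mul_of_nonneg_right hA hBpos.le
    have h3 : (2*s^2-2*s+1) * (Real.exp (2*t) * (1 + 2*d + 2*d^2 + (4/3)*d^3))
        ≤ (2*s^2-2*s+1) * Real.exp (2*s) :=
      mul_le_mul_of_nonneg_left hcube2 (by nlinarith [sq_nonneg (s-1), sq_nonneg s])
    have h4 : (2*s^2-2*s+1) * (Real.exp (2*t) * (1 + 2*d + 2*d^2 + (4/3)*d^3))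
        = 2*s^2*Real.exp (2*t) + Real.exp (2*t) * B := by rw [hBdef]; ring
    linarith [h2, h3, h4, hpB]
  have hq : (0:ℝ) < (n:ℝ)+1 := by positivity
  rw [show ((n:ℝ)+1) = s^2 from hs2.symm]
  have hdiv : ((s - 1/2) * Real.exp (2*s) + 1/2)/s^2 ≤ Real.exp (2*s) - Real.exp (2*t) - 1 := by
    rw [div_le_iff₀ (by positivity)]
    linarith [key]
  linarith

private lemma tel (n : ℕ) :
    (Real.sqrt n + 1/2) * Real.exp (2*Real.sqrt n) ≤
    (Real.sqrt ((n:ℝ)+1) - 1/2) * Real.exp (2*Real.sqrt ((n:ℝ)+1)) := by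
  set a := Real.sqrt n with hadef
  set b := Real.sqrt ((n:ℝ)+1) with hbdef
  have ha : 0 ≤ a := Real.sqrt_nonneg _
  have ha2 : a^2 = n := Real.sq_sqrt (Nat.cast_nonneg n)
  have hb2 : b^2 = (n:ℝ)+1 := Real.sq_sqrt (by positivity)
  have hab : a ≤ b := Real.sqrt_le_sqrt (by linarith)
  have hb1 : 1 ≤ b := by nlinarith
  have h1 : 1 + 2*(b-a) ≤ Real.exp (2*(b-a)) := by
    linarith [Real.add_one_le_exp (2*(b-a))]
  have hexp : Real.exp (2*a) * (1 + 2*(b-a)) ≤ Real.exp (2*b) := by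
    calc Real.exp (2*a) * (1+2*(b-a)) ≤ Real.exp (2*a) * Real.exp (2*(b-a)) :=
          mul_le_mul_of_nonneg_left h1 (Real.exp_pos _).le
      _ = Real.exp (2*b) := by rw [← Real.exp_add]; ring_nf
  have hpoly : a + 1/2 ≤ (b - 1/2) * (1 + 2*(b-a)) := by nlinarith [sq_nonneg (b-a)]
  calc (a+1/2) * Real.exp (2*a)
      ≤ ((b-1/2)*(1+2*(b-a))) * Real.exp (2*a) :=
        mul_le_mul_of_nonneg_right hpoly (Real.exp_pos _).le
    _ = (b-1/2) * (Real.exp (2*a) * (1+2*(b-a))) := by ring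
    _ ≤ (b-1/2) * Real.exp (2*b) := mul_le_mul_of_nonneg_left hexp (by linarith)

private lemma rle {m : ℝ} (hm : 0 ≤ m) {r : ℝ}
    (h : r ≤ 1 + 2*m + (4/3)*m*Real.sqrt m) : r ≤ Real.exp (2*Real.sqrt m) := by
  have h2 : (Real.sqrt m)^2 = m := Real.sq_sqrt hm
  have h0 : 0 ≤ Real.sqrt m := Real.sqrt_nonneg m
  have ht3 : (Real.sqrt m)^3 = m * Real.sqrt m := by
    rw [pow_succ, h2]
  have hc := exp_cubic (by positivity : (0:ℝ) ≤ 2*Real.sqrt m)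
  nlinarith [hc, h, h0, ht3, h2]

theorem stmt4 (Φ : ℕ → ℝ) (h0 : Φ 0 = 0)
    (hrec : ∀ n : ℕ, 1 ≤ n →
      Φ n ≤ Φ (n - 1) + 1 + (1 / (n : ℝ)) * ∑ i ∈ Finset.range n, Φ i) :
    ∀ n : ℕ, Φ n ≤ Real.exp (2 * Real.sqrt n) ∧
      Real.exp (2 * Real.sqrt n) ≤ (2 : ℝ) ^ ((3 : ℝ) * Real.sqrt n) := by
  -- small explicit bounds
  have hΦ1 : Φ 1 ≤ 1 := by
    have h := hrec 1 le_rfl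
    norm_num [Finset.sum_range_one, h0] at h
    linarith
  have hΦ2 : Φ 2 ≤ 5/2 := by
    have h := hrec 2 (by norm_num)
    norm_num [Finset.sum_range_succ, Finset.sum_range_one, h0] at h
    linarith
  have hΦ3 : Φ 3 ≤ 14/3 := by
    have h := hrec 3 (by norm_num)
    norm_num [Finset.sum_range_succ, Finset.sum_range_one, h0] at h
    linarith
  have hΦ4 : Φ 4 ≤ 185/24 := by
    have h := hrec 4 (by norm_num)
    norm_num [Finset.sum_range_succ, Finset.sum_range_one, h0] at h
    linarith
  have hΦ5 : Φ 5 ≤ 713/60 := by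
    have h := hrec 5 (by norm_num)
    norm_num [Finset.sum_range_succ, Finset.sum_range_one, h0] at h
    linarith
  have hΦ6 : Φ 6 ≤ 12607/720 := by
    have h := hrec 6 (by norm_num)
    norm_num [Finset.sum_range_succ, Finset.sum_range_one, h0] at h
    linarith
  have hΦ7 : Φ 7 ≤ 62941/2520 := by
    have h := hrec 7 (by norm_num)
    norm_num [Finset.sum_range_succ, Finset.sum_range_one, h0] at h
    linarith
  have hΦ8 : Φ 8 ≤ 1401409/40320 := by
    have h := hrec 8 (by norm_num)
    norm_num [Finset.sum_range_succ, Finset.sum_range_one, h0] at h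
    linarith
  have hsq2 : ∀ m : ℝ, 4 ≤ m → (2:ℝ) ≤ Real.sqrt m := by
    intro m hm
    nlinarith [Real.sq_sqrt (by linarith : (0:ℝ) ≤ m), Real.sqrt_nonneg m]
  have hE1 : Φ 1 ≤ Real.exp (2*Real.sqrt 1) := by
    apply rle (by norm_num)
    nlinarith [Real.sqrt_nonneg (1:ℝ), hΦ1]
  have hE2 : Φ 2 ≤ Real.exp (2*Real.sqrt 2) := by
    apply rle (by norm_num)
    nlinarith [Real.sqrt_nonneg (2:ℝ), hΦ2]
  have hE3 : Φ 3 ≤ Real.exp (2*Real.sqrt 3) := by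
    apply rle (by norm_num)
    nlinarith [Real.sqrt_nonneg (3:ℝ), hΦ3]
  have hE4 : Φ 4 ≤ Real.exp (2*Real.sqrt 4) := by
    apply rle (by norm_num)
    nlinarith [Real.sqrt_nonneg (4:ℝ), hΦ4]
  have hE5 : Φ 5 ≤ Real.exp (2*Real.sqrt 5) := by
    apply rle (by norm_num)
    nlinarith [hsq2 5 (by norm_num), hΦ5]
  have hE6 : Φ 6 ≤ Real.exp (2*Real.sqrt 6) := by
    apply rle (by norm_num)
    nlinarith [hsq2 6 (by norm_num), hΦ6]
  have hE7 : Φ 7 ≤ Real.exp (2*Real.sqrt 7) := by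
    apply rle (by norm_num)
    nlinarith [hsq2 7 (by norm_num), hΦ7]
  have hE8 : Φ 8 ≤ Real.exp (2*Real.sqrt 8) := by
    apply rle (by norm_num)
    nlinarith [hsq2 8 (by norm_num), hΦ8]
  have key : ∀ n : ℕ, Φ n ≤ Real.exp (2*Real.sqrt n) ∧
      ∑ i ∈ Finset.range n, Φ i ≤
        (Real.sqrt n - 1/2) * Real.exp (2*Real.sqrt n) + 1/2 := by
    intro n
    induction n with
    | zero =>
      constructor
      · rw [h0]; positivity
      · norm_num [Real.sqrt_zero, Real.exp_zero]
    | succ n ih =>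
      obtain ⟨ihΦ, ihS⟩ := ih
      have hcast : ((n+1:ℕ):ℝ) = (n:ℝ)+1 := by push_cast; ring
      have hS' : ∑ i ∈ Finset.range (n+1), Φ i ≤
          (Real.sqrt ((n:ℝ)+1) - 1/2) * Real.exp (2*Real.sqrt ((n:ℝ)+1)) + 1/2 := by
        rw [Finset.sum_range_succ]
        linarith [tel n, ihS, ihΦ]
      have hΦ' : Φ (n+1) ≤ Real.exp (2*Real.sqrt ((n:ℝ)+1)) := by
        rcases le_or_gt n 7 with hn7 | hn7
        · interval_cases n
          · simpa using hE1
          · norm_num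
            exact hE2
          · norm_num
            exact hE3
          · norm_num
            norm_num at hE4
            exact hE4
          · norm_num
            exact hE5
          · norm_num
            exact hE6
          · norm_num
            exact hE7
          · norm_num
            exact hE8
        · have h := hrec (n+1) (by omega)
          simp only [Nat.add_sub_cancel] at h
          rw [hcast] at h
          have hmul : (1/((n:ℝ)+1)) * (∑ i ∈ Finset.range (n+1), Φ i) ≤
              ((Real.sqrt ((n:ℝ)+1) - 1/2) *
                Real.exp (2*Real.sqrt ((n:ℝ)+1)) + 1/2) / ((n:ℝ)+1) := by
            have h1 := mul_le_mul_of_nonneg_left hS'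
              (by positivity : (0:ℝ) ≤ 1/((n:ℝ)+1))
            conv at h1 => rw [one_div_mul_eq_div ((n:ℝ)+1) ((Real.sqrt ((n:ℝ)+1) - 1/2) * Real.exp (2*Real.sqrt ((n:ℝ)+1)) + 1/2)]
            exact h1
          have hms := mainstep n (by omega)
          linarith [h, hmul, hms, ihΦ]
      refine ⟨?_, ?_⟩
      · rw [hcast]; exact hΦ'
      · rw [hcast]; exact hS'
  intro n
  refine ⟨(key n).1, ?_⟩
  rw [Real.rpow_def_of_pos (by norm_num : (0:ℝ) < 2)]
  apply Real.exp_le_exp.mpr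
  nlinarith [Real.sqrt_nonneg (n:ℝ), Real.log_two_gt_d9]
end

section
/- Let t be a total order on {1,…,k} given in ascending ordering [x₁,…,x_k], and let i = x_a be an element whose 'value interval' is {x_a, x_{a+1}, …, x_b} with a < b. Define the pivot of t at i as the total order t' with ascending ordering [x₁,…,x_{a-1}, x_{a+1},…, x_b, x_a, x_{b+1},…, x_k]. Then t' is a total order, and the set of pairs inverted between t and t' is exactly {(x_a, x_c) : a < c ≤ b}. -/
/-!
On ranks, the pivot is the inverse of the cycle `(a a+1 … b)`, so it composes with `ρ` to a
bijection. It moves rank `a` to `b` and shifts ranks `a+1, …, b` down by one, which keeps their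
relative order; hence the only pairs whose order flips are `x_a` against each `x_c` with `a < c ≤ b`.
-/

/-- New rank function after pivoting: the element of rank `a` is moved to rank `b`,
and elements of ranks `a+1,…,b` are shifted down by one. -/
def pivotRank {k : ℕ} (ρ : Fin k ≃ Fin k) (a b : Fin k) (u : Fin k) : Fin k :=
  if ρ u = a then b
  else if (a : ℕ) < (ρ u : ℕ) ∧ (ρ u : ℕ) ≤ (b : ℕ) then
    ⟨(ρ u : ℕ) - 1, lt_of_le_of_lt (Nat.sub_le _ _) (ρ u).isLt⟩
  else ρ u

section

variable {k : ℕ} {a b : Fin k}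

theorem pivotRank_refl_cycleIcc (hab : a ≤ b) (r : Fin k) :
    pivotRank (Equiv.refl _) a b (Fin.cycleIcc a b r) = r := by
  have : NeZero k := NeZero.of_pos a.pos
  rcases lt_or_ge r a with hra | har
  · rw [Fin.cycleIcc_of_lt hra]
    simp only [pivotRank, Equiv.refl_apply, Fin.lt_def] at *
    grind
  rcases lt_or_ge b r with hbr | hrb
  · rw [Fin.cycleIcc_of_gt hbr]
    simp only [pivotRank, Equiv.refl_apply, Fin.lt_def] at *
    grind
  rw [Fin.cycleIcc_of_le_of_le har hrb]
  split_ifs with hrb'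
  · simp [pivotRank, hrb']
  · have hsucc : ((r + 1 : Fin k) : ℕ) = r + 1 := Fin.val_add_one_of_lt' <| by
      have : (r : ℕ) ≠ b := Fin.val_ne_of_ne hrb'
      have := b.isLt
      rw [Fin.le_def] at hrb
      omega
    simp only [pivotRank, Equiv.refl_apply, Fin.ext_iff, Fin.le_def, hsucc] at *
    grind

theorem pivotRank_eq_cycleIcc_symm_comp (hab : a ≤ b) (ρ : Fin k ≃ Fin k) :
    pivotRank ρ a b = (Fin.cycleIcc a b).symm ∘ ρ := by
  funext u
  have h := pivotRank_refl_cycleIcc hab ((Fin.cycleIcc a b).symm (ρ u))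
  rw [Equiv.apply_symm_apply] at h
  -- `pivotRank ρ a b u` is definitionally `pivotRank (Equiv.refl _) a b (ρ u)`
  exact h

theorem pivotRank_refl_inverted_iff (hab : a ≤ b) (r s : Fin k) :
    r < s ∧ pivotRank (Equiv.refl _) a b s < pivotRank (Equiv.refl _) a b r ↔
      r = a ∧ a < s ∧ s ≤ b := by
  unfold pivotRank
  split_ifs <;> simp only [Fin.lt_def, Fin.le_def, Fin.ext_iff, Equiv.refl_apply] at * <;> omega

end

theorem stmt15_general {k : ℕ} (ρ : Fin k ≃ Fin k) (a b : Fin k)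
    (hab : a < b) :
    Function.Bijective (pivotRank ρ a b) ∧
    (∀ u w : Fin k,
      (ρ u < ρ w ∧ pivotRank ρ a b w < pivotRank ρ a b u) ↔
      (ρ u = a ∧ a < ρ w ∧ ρ w ≤ b)) := by
  refine ⟨?_, fun u w => pivotRank_refl_inverted_iff hab.le (ρ u) (ρ w)⟩
  rw [pivotRank_eq_cycleIcc_symm_comp hab.le]
  exact (Fin.cycleIcc a b).symm.bijective.comp ρ.bijective

theorem stmt15 {k : ℕ} (ρ : Fin k ≃ Fin k) (v : Fin k → ℝ) (a b : Fin k)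
    (hab : a < b)
    (hint : ∀ u : Fin k, v u = v (ρ.symm a) ↔ (a ≤ ρ u ∧ ρ u ≤ b)) :
    Function.Bijective (pivotRank ρ a b) ∧
    (∀ u w : Fin k,
      (ρ u < ρ w ∧ pivotRank ρ a b w < pivotRank ρ a b u) ↔
      (ρ u = a ∧ a < ρ w ∧ ρ w ≤ b)) :=
  stmt15_general ρ a b hab
end

section
/- Define Φ(n) by Φ(0) = 0 and Φ(n) = Φ(n−1) + 1 + (1/n)·Σ_{i=0}^{n−1} Φ(i) (equality version). Then for all n, Φ(n) ≥ n and Φ(n) ≤ e^{2√n}. -/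
open Real

lemma exp_quad' {x : ℝ} (hx : 0 ≤ x) : 1 + x + x^2/2 ≤ Real.exp x := by
  have h := Real.sum_le_exp_of_nonneg hx 3
  simp [Finset.sum_range_succ, Nat.factorial] at h
  nlinarith [h]

lemma L1' (a c : ℝ) (ha : 1 ≤ a) (hc : 0 ≤ c) (h2 : a^2 = c^2 + 1) :
    Real.exp (2*c) + (a - 1/2)/a^2 * Real.exp (2*a) ≤ Real.exp (2*a) := by
  have ha0 : (0:ℝ) < a := by linarith
  set u : ℝ := 1/a with hu
  have hu0 : 0 < u := by positivity
  have hu1 : u ≤ 1 := by rw [hu, div_le_one ha0]; linarith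
  have h2c : 2*c ≤ 2*a - u := by
    have h1 : 1/a ≤ 2*a - 2*c := by
      rw [div_le_iff₀ ha0]; nlinarith [sq_nonneg (a-c)]
    rw [hu]; linarith
  have hexp_c : Real.exp (2*c) ≤ Real.exp (2*a) / Real.exp u := by
    rw [← Real.exp_sub]; exact Real.exp_le_exp.mpr h2c
  have hquad : 1 + u + u^2/2 ≤ Real.exp u := exp_quad' hu0.le
  have hcoef : (a - 1/2)/a^2 = u - u^2/2 := by rw [hu]; field_simp
  rw [hcoef]
  have hE : (0:ℝ) ≤ Real.exp (2*a) := (Real.exp_pos _).le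
  have hpos1 : (0:ℝ) < 1 - u + u^2/2 := by nlinarith [sq_nonneg (1-u)]
  have hdiv : Real.exp (2*a) / Real.exp u ≤ Real.exp (2*a) * (1 - u + u^2/2) := by
    rw [div_le_iff₀ (Real.exp_pos u)]
    have hkey := mul_le_mul_of_nonneg_left hquad (mul_nonneg hE hpos1.le)
    nlinarith [hkey, sq_nonneg u, mul_nonneg hE (sq_nonneg (u^2))]
  nlinarith [hexp_c, hdiv, hE]

lemma L2' (a b : ℝ) (ha : 1 ≤ a) (hb : 0 ≤ b) (h2 : b^2 = a^2 + 1) :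
    (a + 1/2) * Real.exp (2*a) + 1 ≤ (b - 1/2) * Real.exp (2*b) := by
  have hab : a < b := by nlinarith
  set d : ℝ := b - a with hdd
  have hd0 : 0 < d := by simp [hdd]; linarith
  have hd : d * (a + b) = 1 := by rw [hdd]; nlinarith
  have hE : (1+a)^2 ≤ Real.exp (2*a) := by
    have h1 := Real.add_one_le_exp a
    have h2' : Real.exp (2*a) = Real.exp a * Real.exp a := by
      rw [← Real.exp_add]; ring_nf
    nlinarith [Real.exp_pos a]
  have h2d : 1 + 2*d + 2*d^2 ≤ Real.exp (2*d) := by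
    have := exp_quad' (x := 2*d) (by linarith)
    nlinarith [this]
  have hsplit : Real.exp (2*b) = Real.exp (2*a) * Real.exp (2*d) := by
    rw [← Real.exp_add, hdd]; ring_nf
  have hble : b ≤ a + 1 := by nlinarith
  have h2b : 2*b ≤ (1+a)^2 := by nlinarith
  have hbpos : (0:ℝ) < b := by linarith
  have h4 : 1 ≤ 4*b^2*d^2 := by
    have h1 : d^2 * (a+b)^2 = 1 := by rw [← mul_pow, hd, one_pow]
    nlinarith [mul_nonneg (sq_nonneg d) (mul_nonneg hb (by linarith : (0:ℝ) ≤ b - a))]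
  have hfinal1 : 1 ≤ Real.exp (2*a) * (2*b*d^2) := by
    have hE2b : 2*b ≤ Real.exp (2*a) := le_trans h2b hE
    have hnn : (0:ℝ) ≤ 2*b*d^2 := by positivity
    nlinarith [h4, mul_nonneg (sub_nonneg.2 hE2b) hnn]
  have hid : (b - 1/2)*(1+2*d+2*d^2) = (a + 1/2) + 2*b*d^2 := by
    rw [hdd]; nlinarith
  have hb12 : (0:ℝ) ≤ b - 1/2 := by linarith
  have hprod : 0 ≤ (b - 1/2) * Real.exp (2*a) * (Real.exp (2*d) - (1+2*d+2*d^2)) :=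
    mul_nonneg (mul_nonneg hb12 (Real.exp_pos _).le) (by linarith)
  rw [hsplit]
  nlinarith [hprod, hfinal1, Real.exp_pos (2*a), hid, mul_le_mul_of_nonneg_right hid.ge (Real.exp_pos (2*a)).le]

theorem stmt19 (Φ : ℕ → ℝ) (h0 : Φ 0 = 0)
    (hrec : ∀ n : ℕ, 1 ≤ n →
      Φ n = Φ (n - 1) + 1 + (1 / (n : ℝ)) * ∑ i ∈ Finset.range n, Φ i) :
    (∀ n : ℕ, (n : ℝ) ≤ Φ n) ∧
    (∀ n : ℕ, Φ n ≤ Real.exp (2 * Real.sqrt n)) := by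
  have hlow : ∀ n : ℕ, (n : ℝ) ≤ Φ n := by
    intro n
    induction n using Nat.strong_induction_on with
    | _ n ih =>
      match n, ih with
      | 0, _ => simp [h0]
      | (m+1), ih =>
        have h := hrec (m+1) (by omega)
        simp only [Nat.add_sub_cancel] at h
        have hs : (0:ℝ) ≤ ∑ i ∈ Finset.range (m+1), Φ i :=
          Finset.sum_nonneg fun i hi =>
            le_trans (Nat.cast_nonneg i) (ih i (Finset.mem_range.mp hi))
        have hm := ih m (Nat.lt_succ_self m)
        have h1 : (0:ℝ) ≤ (1 / ((m+1 : ℕ) : ℝ)) * ∑ i ∈ Finset.range (m+1), Φ i :=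
          mul_nonneg (by positivity) hs
        push_cast at h h1 ⊢
        linarith
  refine ⟨hlow, ?_⟩
  have key : ∀ n : ℕ, Φ n ≤ Real.exp (2 * Real.sqrt (n:ℝ)) ∧
      (∑ i ∈ Finset.range (n+1), Φ i) ≤
        (Real.sqrt ((n:ℝ)+1) - 1/2) * Real.exp (2 * Real.sqrt ((n:ℝ)+1)) - ((n:ℝ)+1) := by
    intro n
    induction n with
    | zero =>
      constructor
      · simpa [h0] using (Real.exp_pos (2 * Real.sqrt (0:ℝ))).le
      · simp only [Nat.cast_zero, zero_add, Real.sqrt_one, Finset.sum_range_one, h0]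
        nlinarith [Real.add_one_le_exp (2:ℝ)]
    | succ n ih =>
      obtain ⟨hA, hB⟩ := ih
      have ha2 : (Real.sqrt ((n:ℝ)+1))^2 = (n:ℝ)+1 := Real.sq_sqrt (by positivity)
      have hc2 : (Real.sqrt ((n:ℝ)))^2 = (n:ℝ) := Real.sq_sqrt (Nat.cast_nonneg n)
      have hb2 : (Real.sqrt ((n:ℝ)+2))^2 = (n:ℝ)+2 := Real.sq_sqrt (by positivity)
      set a := Real.sqrt ((n:ℝ)+1) with hadef
      set c := Real.sqrt ((n:ℝ)) with hcdef
      set b := Real.sqrt ((n:ℝ)+2) with hbdef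
      have hc0 : 0 ≤ c := Real.sqrt_nonneg _
      have hb0 : 0 ≤ b := Real.sqrt_nonneg _
      have ha1 : 1 ≤ a := by
        rw [hadef, Real.one_le_sqrt]; linarith [Nat.cast_nonneg (α := ℝ) n]
      have hrec1 := hrec (n+1) (by omega)
      simp only [Nat.add_sub_cancel] at hrec1
      push_cast at hrec1
      have hpos : (0:ℝ) < (n:ℝ)+1 := by positivity
      have hmul := mul_le_mul_of_nonneg_left hB (le_of_lt (one_div_pos.mpr hpos))
      have hstep1 : Φ (n+1) ≤ Real.exp (2*c) + 1 +
          (1/((n:ℝ)+1)) * ((a - 1/2) * Real.exp (2*a) - ((n:ℝ)+1)) := by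
        rw [hrec1]; linarith [hA, hmul]
      have hsimp : Real.exp (2*c) + 1 +
          (1/((n:ℝ)+1)) * ((a - 1/2) * Real.exp (2*a) - ((n:ℝ)+1))
          = Real.exp (2*c) + (a - 1/2)/a^2 * Real.exp (2*a) := by
        rw [ha2]; field_simp; ring
      have hgoal1 : Φ (n+1) ≤ Real.exp (2*a) := by
        rw [hsimp] at hstep1
        exact le_trans hstep1 (L1' a c ha1 hc0 (by rw [ha2, hc2]))
      have hcast1 : ((n+1:ℕ):ℝ) = (n:ℝ)+1 := by push_cast; ring
      constructor
      · rw [hcast1]; exact hgoal1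
      · rw [hcast1, Finset.sum_range_succ]
        have hL2 := L2' a b ha1 hb0 (by rw [ha2, hb2]; ring)
        have : (n:ℝ)+1+1 = (n:ℝ)+2 := by ring
        rw [this]
        linarith [hB, hgoal1]
  intro n
  exact (key n).1
end
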